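/- arXiv:1108.1610 — 9 statements merged into one kernel-verified Lean document; each statement's English description precedes it below -/
import Mathlib

section
/- Let Δ = σ + 4m be a fundamental discriminant, Q₀(x,y) = x² + σxy − my² the principal form. Suppose A₁, A₂, β₁, β₂ are integers with A₁² | Q₀(β₁,1), A₂² | Q₀(β₂,1), gcd(A₁,Δ) = 1, gcd(A₂,Δ) = 1. Let β⁺ = β₁ + β₂ + σ, ê = gcd(A₁², A₂², β⁺) and e = gcd(A₁, A₂, β⁺). Then ê = e². -/
/-!
Any common divisor `d` of `A₁`, `A₂` and `β⁺ = β₁ + β₂ + σ` has `d² ∣ Q₀(βᵢ, 1)`, and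
`Q₀(β₁, 1) - Q₀(β₂, 1) = (β₁ - β₂) β⁺`, so `d² ∣ (β₁ - β₂) β⁺`. Modulo `d` we have
`β₂ ≡ -β₁ - σ`, whence `(β₁ - β₂)² ≡ (2β₁ + σ)² = 4 Q₀(β₁, 1) + σ² + 4m ≡ Δ` (using `σ² = σ`); as `d` is prime to `Δ`, it is prime to
`β₁ - β₂`, and therefore `d² ∣ β⁺`. For `d = e` this gives `e² ∣ ê`, and `ê ∣ e²` holds
because `gcd(A₁², A₂²) = gcd(A₁, A₂)²`.
-/

/-- `Δ` is a fundamental discriminant of a quadratic field. -/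
def IsFundamentalDiscriminant (Δ : ℤ) : Prop :=
  ∃ d : ℤ, Squarefree d ∧
    ((d % 4 = 1 ∧ Δ = d) ∨ ((d % 4 = 2 ∨ d % 4 = 3) ∧ Δ = 4 * d))

theorem gcd_pow_pow_int (a b : ℤ) (n : ℕ) : gcd (a ^ n) (b ^ n) = gcd a b ^ n := by
  rw [← Int.coe_gcd, ← Int.coe_gcd, Int.pow_gcd_pow, Nat.cast_pow]

theorem gcd_gcd_sq_sq_eq_sq_of_sq_dvd {a b c : ℤ} (h : gcd (gcd a b) c ^ 2 ∣ c) :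
    gcd (gcd (a ^ 2) (b ^ 2)) c = gcd (gcd a b) c ^ 2 := by
  rw [gcd_pow_pow_int]
  refine dvd_antisymm_of_normalize_eq (normalize_gcd _ _) (by rw [← gcd_pow_pow_int, normalize_gcd])
    ?_ (dvd_gcd (pow_dvd_pow_of_dvd (gcd_dvd_left _ _) 2) h)
  calc gcd (gcd a b ^ 2) c ∣ gcd (gcd a b ^ 2) (c ^ 2) :=
        gcd_dvd_gcd dvd_rfl (dvd_pow_self c two_ne_zero)
    _ = gcd (gcd a b) c ^ 2 := gcd_pow_pow_int _ _ 2

theorem isCoprime_sub_of_dvd_principal_value {σ m β₁ β₂ d : ℤ}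
    (hd : IsCoprime d (σ ^ 2 + 4 * m)) (h₁ : d ∣ β₁ ^ 2 + σ * β₁ - m)
    (hβ : d ∣ β₁ + β₂ + σ) : IsCoprime d (β₁ - β₂) := by
  obtain ⟨k, hk⟩ : d ∣ (β₁ - β₂) ^ 2 - (σ ^ 2 + 4 * m) := by
    have key : (β₁ - β₂) ^ 2 - (σ ^ 2 + 4 * m) =
        4 * (β₁ ^ 2 + σ * β₁ - m) - (β₁ + β₂ + σ) * (3 * β₁ - β₂ + σ) := by ring
    rw [key]
    exact dvd_sub (dvd_mul_of_dvd_right h₁ 4) (dvd_mul_of_dvd_left hβ _)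
  have hsq : IsCoprime d ((β₁ - β₂) ^ 2) := by
    rw [sub_eq_iff_eq_add'.1 hk]
    exact hd.add_mul_left_right k
  exact (IsCoprime.pow_right_iff two_pos).1 hsq

theorem sq_dvd_of_sq_dvd_principal_values {σ m β₁ β₂ d : ℤ}
    (hd : IsCoprime d (σ ^ 2 + 4 * m)) (h₁ : d ^ 2 ∣ β₁ ^ 2 + σ * β₁ - m)
    (h₂ : d ^ 2 ∣ β₂ ^ 2 + σ * β₂ - m) (hβ : d ∣ β₁ + β₂ + σ) : d ^ 2 ∣ β₁ + β₂ + σ := by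
  have hsub : β₁ ^ 2 + σ * β₁ - m - (β₂ ^ 2 + σ * β₂ - m) = (β₁ - β₂) * (β₁ + β₂ + σ) := by
    ring
  have hcop := isCoprime_sub_of_dvd_principal_value hd ((dvd_pow_self d two_ne_zero).trans h₁) hβ
  exact hcop.pow_left.dvd_of_dvd_mul_left (hsub ▸ dvd_sub h₁ h₂)

theorem gcd_sq_eq_general (σ m Δ A₁ A₂ β₁ β₂ : ℤ) (hσ : σ = 0 ∨ σ = 1) (hΔ : Δ = σ + 4 * m)
    (h1 : A₁ ^ 2 ∣ β₁ ^ 2 + σ * β₁ - m) (h2 : A₂ ^ 2 ∣ β₂ ^ 2 + σ * β₂ - m)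
    (hc1 : Int.gcd A₁ Δ = 1) :
    gcd (gcd (A₁ ^ 2) (A₂ ^ 2)) (β₁ + β₂ + σ) =
      (gcd (gcd A₁ A₂) (β₁ + β₂ + σ)) ^ 2 := by
  set e := gcd (gcd A₁ A₂) (β₁ + β₂ + σ)
  have he₁ : e ∣ A₁ := (gcd_dvd_left _ _).trans (gcd_dvd_left _ _)
  have he₂ : e ∣ A₂ := (gcd_dvd_left _ _).trans (gcd_dvd_right _ _)
  have hσ_sq : σ ^ 2 = σ := by rcases hσ with rfl | rfl <;> norm_num
  have he_cop : IsCoprime e (σ ^ 2 + 4 * m) := by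
    rw [hσ_sq, ← hΔ]
    exact (Int.isCoprime_iff_gcd_eq_one.2 hc1).of_isCoprime_of_dvd_left he₁
  exact gcd_gcd_sq_sq_eq_sq_of_sq_dvd <| sq_dvd_of_sq_dvd_principal_values he_cop
    ((pow_dvd_pow_of_dvd he₁ 2).trans h1) ((pow_dvd_pow_of_dvd he₂ 2).trans h2) (gcd_dvd_right _ _)

theorem gcd_sq_eq (σ m Δ A₁ A₂ β₁ β₂ : ℤ) (hσ : σ = 0 ∨ σ = 1) (hΔ : Δ = σ + 4 * m)
    (hfund : IsFundamentalDiscriminant Δ)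
    (h1 : A₁ ^ 2 ∣ β₁ ^ 2 + σ * β₁ - m) (h2 : A₂ ^ 2 ∣ β₂ ^ 2 + σ * β₂ - m)
    (hc1 : Int.gcd A₁ Δ = 1) (hc2 : Int.gcd A₂ Δ = 1) :
    gcd (gcd (A₁ ^ 2) (A₂ ^ 2)) (β₁ + β₂ + σ) =
      (gcd (gcd A₁ A₂) (β₁ + β₂ + σ)) ^ 2 :=
  gcd_sq_eq_general σ m Δ A₁ A₂ β₁ β₂ hσ hΔ h1 h2 hc1
end

section
/- Let Δ = σ + 4m be a fundamental discriminant and Q₀(x,y) = x² + σxy − my². If A₁², A₂² divide Q₀(β₁,1), Q₀(β₂,1) respectively and gcd(A₁,Δ)=1, and e = gcd(A₁, A₂, β₁+β₂+σ), then e² divides β₁+β₂+σ. -/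
section QuadraticPolynomial

variable {R : Type*} [CommRing R] {σ m e x y : R}

theorem isCoprime_sub_of_dvd_quad_of_dvd_add (hdisc : IsCoprime e (σ ^ 2 + 4 * m))
    (hx : e ∣ x ^ 2 + σ * x - m) (hs : e ∣ x + y + σ) : IsCoprime e (x - y) := by
  obtain ⟨a, ha⟩ := hx
  obtain ⟨b, hb⟩ := hs
  have hsq : (x - y) ^ 2 = σ ^ 2 + 4 * m + e * (4 * a - b * (2 * (2 * x + σ) - (x + y + σ))) := by
    linear_combination 4 * ha - (2 * (2 * x + σ) - (x + y + σ)) * hb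
  rw [← IsCoprime.pow_right_iff two_pos, hsq]
  exact IsCoprime.add_mul_left_right_iff.mpr hdisc

theorem sq_dvd_add_add_of_sq_dvd_quad (hdisc : IsCoprime e (σ ^ 2 + 4 * m))
    (hx : e ^ 2 ∣ x ^ 2 + σ * x - m) (hy : e ^ 2 ∣ y ^ 2 + σ * y - m) (hs : e ∣ x + y + σ) :
    e ^ 2 ∣ x + y + σ := by
  have hprod : e ^ 2 ∣ (x - y) * (x + y + σ) := by
    have hdiff : (x - y) * (x + y + σ) = (x ^ 2 + σ * x - m) - (y ^ 2 + σ * y - m) := by ring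
    exact hdiff ▸ dvd_sub hx hy
  have hcop : IsCoprime e (x - y) :=
    isCoprime_sub_of_dvd_quad_of_dvd_add hdisc ((dvd_pow_self e two_ne_zero).trans hx) hs
  exact hcop.pow_left.dvd_of_dvd_mul_left hprod

end QuadraticPolynomial

theorem gcd_sq_dvd_general (σ m Δ A₁ A₂ β₁ β₂ : ℤ) (hσ : σ = 0 ∨ σ = 1) (hΔ : Δ = σ + 4 * m)
    (h1 : A₁ ^ 2 ∣ β₁ ^ 2 + σ * β₁ - m) (h2 : A₂ ^ 2 ∣ β₂ ^ 2 + σ * β₂ - m)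
    (hc1 : Int.gcd A₁ Δ = 1) :
    (gcd (gcd A₁ A₂) (β₁ + β₂ + σ)) ^ 2 ∣ (β₁ + β₂ + σ) := by
  set e := gcd (gcd A₁ A₂) (β₁ + β₂ + σ)
  have heA₁ : e ∣ A₁ := (gcd_dvd_left _ _).trans (gcd_dvd_left _ _)
  have heA₂ : e ∣ A₂ := (gcd_dvd_left _ _).trans (gcd_dvd_right _ _)
  have hΔsq : Δ = σ ^ 2 + 4 * m := by rcases hσ with rfl | rfl <;> simp [hΔ]
  have hdisc : IsCoprime e (σ ^ 2 + 4 * m) :=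
    hΔsq ▸ (Int.isCoprime_iff_gcd_eq_one.mpr hc1).of_isCoprime_of_dvd_left heA₁
  exact sq_dvd_add_add_of_sq_dvd_quad hdisc ((pow_dvd_pow_of_dvd heA₁ 2).trans h1)
    ((pow_dvd_pow_of_dvd heA₂ 2).trans h2) (gcd_dvd_right _ _)

theorem gcd_sq_dvd (σ m Δ A₁ A₂ β₁ β₂ : ℤ) (hσ : σ = 0 ∨ σ = 1) (hΔ : Δ = σ + 4 * m)
    (hfund : IsFundamentalDiscriminant Δ)
    (h1 : A₁ ^ 2 ∣ β₁ ^ 2 + σ * β₁ - m) (h2 : A₂ ^ 2 ∣ β₂ ^ 2 + σ * β₂ - m)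
    (hc1 : Int.gcd A₁ Δ = 1) :
    (gcd (gcd A₁ A₂) (β₁ + β₂ + σ)) ^ 2 ∣ (β₁ + β₂ + σ) :=
  gcd_sq_dvd_general σ m Δ A₁ A₂ β₁ β₂ hσ hΔ h1 h2 hc1
end

section
/- The binary operation P₁ ⊕ P₂ = (x₁x₂ + m y₁y₂, x₁y₂ + x₂y₁ + σ y₁y₂) makes the set of points (x,y) in any commutative ring R satisfying x² + σxy − my² = 1 into an abelian group with identity (1,0), and the inverse of (x,y) is (x + σy, −y). -/
/-- The points of the Pell conic `x² + σxy - my² = 1` over a commutative ring `R`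
form an abelian group under `P₁ ⊕ P₂ = (x₁x₂ + m y₁y₂, x₁y₂ + x₂y₁ + σ y₁y₂)`,
with identity `(1,0)` and inverse of `(x,y)` given by `(x + σy, -y)`. -/
theorem pell_conic_comm_group (R : Type*) [CommRing R] (σ m : R) :
    ∃ (mul : {P : R × R // P.1 ^ 2 + σ * P.1 * P.2 - m * P.2 ^ 2 = 1} →
             {P : R × R // P.1 ^ 2 + σ * P.1 * P.2 - m * P.2 ^ 2 = 1} →
             {P : R × R // P.1 ^ 2 + σ * P.1 * P.2 - m * P.2 ^ 2 = 1})
      (one : {P : R × R // P.1 ^ 2 + σ * P.1 * P.2 - m * P.2 ^ 2 = 1})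
      (inv : {P : R × R // P.1 ^ 2 + σ * P.1 * P.2 - m * P.2 ^ 2 = 1} →
             {P : R × R // P.1 ^ 2 + σ * P.1 * P.2 - m * P.2 ^ 2 = 1}),
      (∀ P Q, (mul P Q).val =
        (P.val.1 * Q.val.1 + m * P.val.2 * Q.val.2,
         P.val.1 * Q.val.2 + Q.val.1 * P.val.2 + σ * P.val.2 * Q.val.2)) ∧
      one.val = (1, 0) ∧
      (∀ P, (inv P).val = (P.val.1 + σ * P.val.2, -P.val.2)) ∧
      (∀ P Q T, mul (mul P Q) T = mul P (mul Q T)) ∧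
      (∀ P Q, mul P Q = mul Q P) ∧
      (∀ P, mul one P = P) ∧
      (∀ P, mul (inv P) P = one) := by
  refine ⟨fun P Q => ⟨(P.val.1 * Q.val.1 + m * P.val.2 * Q.val.2,
      P.val.1 * Q.val.2 + Q.val.1 * P.val.2 + σ * P.val.2 * Q.val.2), by
        have hP := P.2; have hQ := Q.2
        simp only at *
        linear_combination (P.val.1 ^ 2 + σ * P.val.1 * P.val.2 - m * P.val.2 ^ 2) * hQ + hP⟩,
    ⟨(1, 0), by simp⟩,
    fun P => ⟨(P.val.1 + σ * P.val.2, -P.val.2), by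
        have hP := P.2; simp only at *; linear_combination hP⟩,
    ?_, ?_, ?_, ?_, ?_, ?_, ?_⟩
  · intro P Q
    rfl
  · rfl
  · intro P
    rfl
  · intro P Q T
    apply Subtype.ext; apply Prod.ext <;> simp <;> ring
  · intro P Q
    apply Subtype.ext; apply Prod.ext <;> simp <;> ring
  · intro P
    apply Subtype.ext; apply Prod.ext <;> simp
  · intro P
    have hP := P.2
    apply Subtype.ext; apply Prod.ext <;> simp
    · linear_combination hP
    · ring
end

section
/- Let Δ = σ + 4m be a fundamental discriminant and Q₀(β,1) = β² + σβ − m. Let A, β be integers with A² | Q₀(β,1). Set e = gcd(A, A, 2β+σ). Then e = 1. -/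
/-- When composing the form `(A, 2β+σ, Q₀(β,1)/A)` with itself,
`e = gcd(A, A, 2β+σ) = 1`. -/
theorem gcd_self_comp (σ m A β : ℤ) (hσ : σ = 0 ∨ σ = 1)
    (hfund : IsFundamentalDiscriminant (σ + 4 * m))
    (hdvd : A ^ 2 ∣ β ^ 2 + σ * β - m) :
    gcd (gcd A A) (2 * β + σ) = 1 := by
  set g : ℤ := gcd (gcd A A) (2 * β + σ) with hg
  have hg0 : 0 ≤ g := by
    rw [hg, ← Int.coe_gcd]
    exact Int.natCast_nonneg _
  have hgA : g ∣ A := dvd_trans (gcd_dvd_left _ _) (gcd_dvd_left A A)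
  have hgB : g ∣ 2 * β + σ := gcd_dvd_right _ _
  have h1 : g ^ 2 ∣ β ^ 2 + σ * β - m := dvd_trans (pow_dvd_pow_of_dvd hgA 2) hdvd
  have h2 : g ^ 2 ∣ (2 * β + σ) ^ 2 := pow_dvd_pow_of_dvd hgB 2
  have hσσ : σ ^ 2 = σ := by rcases hσ with rfl | rfl <;> ring
  have hΔ : g ^ 2 ∣ σ + 4 * m := by
    have h3 := dvd_sub h2 (h1.mul_left 4)
    have h4 : (2 * β + σ) ^ 2 - 4 * (β ^ 2 + σ * β - m) = σ + 4 * m := by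
      linear_combination hσσ
    rwa [h4] at h3
  obtain ⟨d, hd, hcase⟩ := hfund
  rcases hcase with ⟨hdm, hΔd⟩ | ⟨hdm, hΔd⟩
  · -- Δ = d squarefree
    rw [hΔd] at hΔ
    have hu : IsUnit g := hd g (by rw [← sq]; exact hΔ)
    rcases Int.isUnit_iff.mp hu with h | h <;> omega
  · -- Δ = 4 * d
    rw [hΔd] at hΔ
    have hσ0 : σ = 0 := by
      rcases hσ with rfl | rfl
      · rfl
      · omega
    subst hσ0
    have hm : d = m := by omega
    subst hm
    rcases Int.even_or_odd g with ⟨c, hgc⟩ | ⟨c, hgc⟩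
    · -- g even: g = c + c, c² ∣ d, so g = 2, contradiction mod 4
      have hc2 : (4 : ℤ) * (c * c) ∣ 4 * d := by
        have he : g ^ 2 = 4 * (c * c) := by rw [hgc]; ring
        rwa [he] at hΔ
      have hcd : c * c ∣ d := (mul_dvd_mul_iff_left (by norm_num : (4:ℤ) ≠ 0)).mp hc2
      have hu : IsUnit c := hd c hcd
      have hg2 : g = 2 := by
        rcases Int.isUnit_iff.mp hu with h | h <;> omega
      have h2A : (2 : ℤ) ∣ A := hg2 ▸ hgA
      have h4 : (4 : ℤ) ∣ β ^ 2 + 0 * β - d := by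
        refine dvd_trans ?_ hdvd
        have h5 := pow_dvd_pow_of_dvd h2A 2
        norm_num at h5 ⊢
        exact h5
      obtain ⟨t, ht⟩ := h4
      rcases Int.even_or_odd β with ⟨k, hk⟩ | ⟨k, hk⟩
      · have h6 : (4 : ℤ) ∣ d := ⟨k * k - t, by subst hk; linear_combination -ht⟩
        omega
      · have h6 : (4 : ℤ) ∣ d - 1 := ⟨k * k + k - t, by subst hk; linear_combination -ht⟩
        omega
    · -- g odd: coprime to 4, so g² ∣ d
      have hcop : IsCoprime g 2 := ⟨-1, c + 1, by rw [hgc]; ring⟩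
      have hcop4 : IsCoprime (g ^ 2) 4 := by
        have h := hcop.pow (m := 2) (n := 2)
        norm_num at h
        exact h
      have hgd : g ^ 2 ∣ d := hcop4.dvd_of_dvd_mul_left hΔ
      have hu : IsUnit g := hd g (by rw [← sq]; exact hgd)
      rcases Int.isUnit_iff.mp hu with h | h <;> omega
end

section
/- Let Δ = σ + 4m and let (t₁,u₁), (t₂,u₂) satisfy Q₁(t₁,u₁) = Q₂(t₂,u₂) = 1, where Qᵢ = (Aᵢ², 2βᵢ+σ, Q₀(βᵢ,1)/Aᵢ²) with Aᵢ² | Q₀(βᵢ,1). Let e² = gcd(A₁², A₂², β⁺) with β⁺ = β₁+β₂+σ, A₃ = A₁A₂/e², and β₃ with A₃² | Q₀(β₃,1) determined by Gauss composition. Then t₃ = e²t₁t₂ + (e²/A₂²)(β₂−β₃)t₁u₂ + (e²/A₁²)(β₁−β₃)t₂u₁ + (e²/(A₁²A₂²))(β₁β₂+m − β₃β⁺)u₁u₂ and u₃ = (A₁²/e²)t₁u₂ + (A₂²/e²)t₂u₁ + (β⁺/e²)u₁u₂ satisfy Q₃(t₃,u₃) = Q₁(t₁,u₁)·Q₂(t₂,u₂)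 = 1, where Q₃ = (A₃², 2β₃+σ, Q₀(β₃,1)/A₃²). -/
set_option maxHeartbeats 4000000 in
/-- Gauss's bilinear transformation realizes composition of forms: if
`Q₁(t₁,u₁) = Q₂(t₂,u₂) = 1` for forms `Qᵢ = (Aᵢ², 2βᵢ+σ, Q₀(βᵢ,1)/Aᵢ²)` of
discriminant `σ + 4m`, `e² = gcd(A₁², A₂², β⁺)`, `A₃ = A₁A₂/e²`, and `β₃` with
`A₃² ∣ Q₀(β₃,1)` is determined by Gauss composition
(`e²β₃ ≡ A₁²β₂j + A₂²β₁k + (β₁β₂+m)ℓ (mod e²A₃²)` where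
`A₁²j + A₂²k + β⁺ℓ = e²`), then the displayed bilinear expressions `(t₃,u₃)`
satisfy `Q₃(t₃,u₃) = 1`. -/
theorem bilinear_composition (σ m A₁ A₂ A₃ β₁ β₂ β₃ e γ₁ γ₂ γ₃ j k ℓ t₁ u₁ t₂ u₂ : ℤ)
    (hσ : σ = 0 ∨ σ = 1)
    (hγ₁ : A₁ ^ 2 * γ₁ = β₁ ^ 2 + σ * β₁ - m)
    (hγ₂ : A₂ ^ 2 * γ₂ = β₂ ^ 2 + σ * β₂ - m)
    (hγ₃ : A₃ ^ 2 * γ₃ = β₃ ^ 2 + σ * β₃ - m)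
    (hA₁ : A₁ ≠ 0) (hA₂ : A₂ ≠ 0) (he0 : e ≠ 0)
    (he : e ^ 2 = gcd (gcd (A₁ ^ 2) (A₂ ^ 2)) (β₁ + β₂ + σ))
    (hA₃ : e ^ 2 * A₃ = A₁ * A₂)
    (hbez : A₁ ^ 2 * j + A₂ ^ 2 * k + (β₁ + β₂ + σ) * ℓ = e ^ 2)
    (hβ₃ : (e ^ 2 * A₃ ^ 2) ∣
      (e ^ 2 * β₃ - (A₁ ^ 2 * β₂ * j + A₂ ^ 2 * β₁ * k + (β₁ * β₂ + m) * ℓ)))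
    (hQ₁ : A₁ ^ 2 * t₁ ^ 2 + (2 * β₁ + σ) * t₁ * u₁ + γ₁ * u₁ ^ 2 = 1)
    (hQ₂ : A₂ ^ 2 * t₂ ^ 2 + (2 * β₂ + σ) * t₂ * u₂ + γ₂ * u₂ ^ 2 = 1) :
    ((A₃ : ℚ)) ^ 2 *
        ((e : ℚ) ^ 2 * t₁ * t₂
          + ((e : ℚ) ^ 2 / (A₂ : ℚ) ^ 2) * ((β₂ : ℚ) - β₃) * t₁ * u₂
          + ((e : ℚ) ^ 2 / (A₁ : ℚ) ^ 2) * ((β₁ : ℚ) - β₃) * t₂ * u₁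
          + ((e : ℚ) ^ 2 / ((A₁ : ℚ) ^ 2 * (A₂ : ℚ) ^ 2))
              * ((β₁ : ℚ) * β₂ + m - (β₃ : ℚ) * ((β₁ : ℚ) + β₂ + σ)) * u₁ * u₂) ^ 2
      + (2 * (β₃ : ℚ) + σ) *
        ((e : ℚ) ^ 2 * t₁ * t₂
          + ((e : ℚ) ^ 2 / (A₂ : ℚ) ^ 2) * ((β₂ : ℚ) - β₃) * t₁ * u₂
          + ((e : ℚ) ^ 2 / (A₁ : ℚ) ^ 2) * ((β₁ : ℚ) - β₃) * t₂ * u₁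
          + ((e : ℚ) ^ 2 / ((A₁ : ℚ) ^ 2 * (A₂ : ℚ) ^ 2))
              * ((β₁ : ℚ) * β₂ + m - (β₃ : ℚ) * ((β₁ : ℚ) + β₂ + σ)) * u₁ * u₂) *
        (((A₁ : ℚ) ^ 2 / (e : ℚ) ^ 2) * t₁ * u₂
          + ((A₂ : ℚ) ^ 2 / (e : ℚ) ^ 2) * t₂ * u₁
          + (((β₁ : ℚ) + β₂ + σ) / (e : ℚ) ^ 2) * u₁ * u₂)
      + (γ₃ : ℚ) *
        (((A₁ : ℚ) ^ 2 / (e : ℚ) ^ 2) * t₁ * u₂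
          + ((A₂ : ℚ) ^ 2 / (e : ℚ) ^ 2) * t₂ * u₁
          + (((β₁ : ℚ) + β₂ + σ) / (e : ℚ) ^ 2) * u₁ * u₂) ^ 2
      = 1 := by
  have hA₃0 : A₃ ≠ 0 := by
    intro h; apply hA₁; have := hA₃; rw [h, mul_zero] at this
    rcases mul_eq_zero.mp this.symm with h1 | h2
    · exact h1
    · exact absurd h2 hA₂
  have hA1q : (A₁ : ℚ) ≠ 0 := Int.cast_ne_zero.mpr hA₁
  have hA2q : (A₂ : ℚ) ≠ 0 := Int.cast_ne_zero.mpr hA₂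
  have hA3q : (A₃ : ℚ) ≠ 0 := Int.cast_ne_zero.mpr hA₃0
  have heq : (e : ℚ) ≠ 0 := Int.cast_ne_zero.mpr he0
  have hγ₁q : (γ₁ : ℚ) = ((β₁ : ℚ) ^ 2 + σ * β₁ - m) / (A₁ : ℚ) ^ 2 := by
    rw [eq_div_iff (pow_ne_zero 2 hA1q), mul_comm]
    exact_mod_cast hγ₁
  have hγ₂q : (γ₂ : ℚ) = ((β₂ : ℚ) ^ 2 + σ * β₂ - m) / (A₂ : ℚ) ^ 2 := by
    rw [eq_div_iff (pow_ne_zero 2 hA2q), mul_comm]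
    exact_mod_cast hγ₂
  have hγ₃q : (γ₃ : ℚ) = ((β₃ : ℚ) ^ 2 + σ * β₃ - m) / (A₃ : ℚ) ^ 2 := by
    rw [eq_div_iff (pow_ne_zero 2 hA3q), mul_comm]
    exact_mod_cast hγ₃
  have hA₃q : (A₃ : ℚ) = (A₁ : ℚ) * A₂ / (e : ℚ) ^ 2 := by
    rw [eq_div_iff (pow_ne_zero 2 heq), mul_comm]
    exact_mod_cast hA₃
  have hQ₁q : (A₁ : ℚ) ^ 2 * t₁ ^ 2 + (2 * β₁ + σ) * t₁ * u₁ + γ₁ * u₁ ^ 2 = 1 := by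
    exact_mod_cast hQ₁
  have hQ₂q : (A₂ : ℚ) ^ 2 * t₂ ^ 2 + (2 * β₂ + σ) * t₂ * u₂ + γ₂ * u₂ ^ 2 = 1 := by
    exact_mod_cast hQ₂
  have key : ((1 : ℚ)) =
      ((A₁ : ℚ) ^ 2 * t₁ ^ 2 + (2 * β₁ + σ) * t₁ * u₁ + γ₁ * u₁ ^ 2) *
      ((A₂ : ℚ) ^ 2 * t₂ ^ 2 + (2 * β₂ + σ) * t₂ * u₂ + γ₂ * u₂ ^ 2) := by
    rw [hQ₁q, hQ₂q]; ring
  rw [key, hγ₁q, hγ₂q, hγ₃q, hA₃q]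
  rcases hσ with rfl | rfl
  · push_cast
    field_simp
    ring
  · push_cast
    field_simp
    ring
end

section
/- Let Δ = σ + 4m and Q₀ the principal form. If (x,y) is a nonzero-y algebraic point of the Pell conic x² + σxy − my² = 1 with A = den(y), ratio β (so (x−βy)/A is an algebraic integer and A² | Q₀(β,1)), then the inverse point (x + σy, −y) has denominator A and ratio β' where β' is the least nonnegative residue of A² − β − σ mod A², i.e. (x + σy − β'(−y))/A is an algebraic integer and A² | Q₀(β',1). -/
/-- `den α = d` iff `d` is the least positive rational integer such that `d • α`
is an algebraic integer. -/
def IsDenominator (α : ℂ) (d : ℕ) : Prop :=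
  IsLeast {n : ℕ | 0 < n ∧ IsIntegral ℤ ((n : ℂ) * α)} d

/-- If `(x,y)` is an algebraic point of the Pell conic with `y ≠ 0`,
denominator `A = den(y)` and ratio `β`, then the inverse point `(x+σy, -y)`
has denominator `A` and ratio `β' = (A² - β - σ) mod A²`. -/
theorem inverse_ratio (σ m : ℤ) (hσ : σ = 0 ∨ σ = 1)
    (x y : ℂ) (hy0 : y ≠ 0)
    (hP : x ^ 2 + (σ : ℂ) * x * y - (m : ℂ) * y ^ 2 = 1)
    (A : ℕ) (hA : IsDenominator y A)
    (β : ℤ) (hint : IsIntegral ℤ ((x - (β : ℂ) * y) / (A : ℂ)))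
    (hdvd : (A : ℤ) ^ 2 ∣ β ^ 2 + σ * β - m) :
    IsDenominator (-y) A ∧
    IsIntegral ℤ ((x + (σ : ℂ) * y - ((((A : ℤ) ^ 2 - β - σ) % (A : ℤ) ^ 2 : ℤ) : ℂ) * (-y))
      / (A : ℂ)) ∧
    (A : ℤ) ^ 2 ∣ (((A : ℤ) ^ 2 - β - σ) % (A : ℤ) ^ 2) ^ 2
        + σ * (((A : ℤ) ^ 2 - β - σ) % (A : ℤ) ^ 2) - m := by
  set β' : ℤ := ((A : ℤ) ^ 2 - β - σ) % (A : ℤ) ^ 2 with hβ'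
  have hApos : 0 < A := hA.1.1
  have hAne : (A : ℂ) ≠ 0 := Nat.cast_ne_zero.mpr hApos.ne'
  -- A² ∣ β' + β + σ
  have hmod : (A : ℤ) ^ 2 ∣ β' + β + σ := by
    have h := Int.emod_add_mul_ediv ((A : ℤ) ^ 2 - β - σ) ((A : ℤ) ^ 2)
    refine ⟨1 - ((A : ℤ) ^ 2 - β - σ) / (A : ℤ) ^ 2, ?_⟩
    rw [hβ']; linarith [h]
  obtain ⟨k, hk⟩ := hmod
  refine ⟨⟨⟨hApos, ?_⟩, ?_⟩, ?_, ?_⟩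
  · have := hA.1.2
    have : IsIntegral ℤ (-((A : ℂ) * y)) := this.neg
    simpa [mul_neg] using this
  · intro n hn
    exact hA.2 ⟨hn.1, by simpa [mul_neg] using hn.2.neg⟩
  · have hAy : IsIntegral ℤ ((A : ℂ) * y) := hA.1.2
    have hki : IsIntegral ℤ ((k : ℂ)) := by
      simpa using isIntegral_algebraMap (A := ℂ) (x := k)
    have hkc : (β' : ℂ) + β + σ = (A : ℂ) ^ 2 * k := by exact_mod_cast hk
    have heq : (x + (σ : ℂ) * y - (β' : ℂ) * (-y)) / (A : ℂ)
        = (x - (β : ℂ) * y) / (A : ℂ) + (k : ℂ) * ((A : ℂ) * y) := by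
      field_simp
      linear_combination y * hkc
    rw [heq]
    exact hint.add (hki.mul hAy)
  · have hc : β' ^ 2 + σ * β' - m =
        (β' + β + σ) * (β' - β) + (β ^ 2 + σ * β - m) := by ring
    rw [hc]
    exact dvd_add (Dvd.dvd.mul_right ⟨k, hk⟩ _) hdvd
end

section
/- Let Δ = σ + 4m be a fundamental discriminant and 𝒫(ℚ) the rational points of x² + σxy − my² = 1. Every rational point (B/A, C/A) with gcd(A,C) = 1 (in lowest common-denominator form) lies in 𝒫(ℚ̄)_prim: there exists an integer β ≡ B·C⁻¹ (mod A²) such that (x − βy)/A ∈ ℤ and A² | Q₀(β,1). -/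
theorem IsCoprime.exists_mul_sub_dvd {R : Type*} [CommRing R] {n C : R} (h : IsCoprime n C)
    (B : R) :
    ∃ β : R, n ∣ β * C - B := by
  obtain ⟨u, v, huv⟩ := h
  exact ⟨B * v, -(B * u), by linear_combination B * huv⟩

theorem exists_int_eq_div_div_of_sq_dvd {A B C β : ℤ} (hA : A ≠ 0) (h : A ^ 2 ∣ β * C - B) :
    ∃ z : ℤ, ((B : ℚ) / A - (β : ℚ) * ((C : ℚ) / A)) / A = (z : ℚ) := by
  obtain ⟨k, hk⟩ := h
  refine ⟨-k, ?_⟩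
  have hkQ : (β : ℚ) * C - B = A ^ 2 * k := by exact_mod_cast hk
  field_simp
  push_cast
  linear_combination -hkQ

theorem dvd_sq_mul_quad_sub_quad {R : Type*} [CommRing R] (σ m : R) {n B C β : R}
    (h : n ∣ β * C - B) :
    n ∣ C ^ 2 * (β ^ 2 + σ * β - m) - (B ^ 2 + σ * B * C - m * C ^ 2) := by
  obtain ⟨k, hk⟩ := h
  exact ⟨k * (β * C + B + σ * C), by linear_combination (β * C + B + σ * C) * hk⟩

theorem rational_points_primitive_general (σ m A B C : ℤ) (hA : 0 < A)
    (hcop : Int.gcd A C = 1)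
    (hP : B ^ 2 + σ * B * C - m * C ^ 2 = A ^ 2) :
    ∃ β : ℤ, (A ^ 2 ∣ β * C - B) ∧
      (∃ z : ℤ, ((B : ℚ) / A - (β : ℚ) * ((C : ℚ) / A)) / A = (z : ℚ)) ∧
      A ^ 2 ∣ β ^ 2 + σ * β - m := by
  have hco : IsCoprime A C := Int.isCoprime_iff_gcd_eq_one.mpr hcop
  obtain ⟨β, hβ⟩ := hco.pow_left.exists_mul_sub_dvd B
  refine ⟨β, hβ, exists_int_eq_div_div_of_sq_dvd hA.ne' hβ, ?_⟩
  have hQ : A ^ 2 ∣ C ^ 2 * (β ^ 2 + σ * β - m) := by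
    have h := dvd_sq_mul_quad_sub_quad σ m hβ
    rw [hP] at h
    exact (dvd_sub_left (dvd_refl _)).mp h
  exact hco.pow_left.pow_right.dvd_of_dvd_mul_left hQ

/-- Every rational point `(B/A, C/A)` of the Pell conic, written in lowest
common-denominator form with `gcd(A,C) = 1`, is primitive: there is an integer
`β ≡ B·C⁻¹ (mod A²)` with `(x - βy)/A ∈ ℤ` and `A² ∣ Q₀(β,1)`. -/
theorem rational_points_primitive (σ m A B C : ℤ) (hσ : σ = 0 ∨ σ = 1)
    (hfund : IsFundamentalDiscriminant (σ + 4 * m)) (hA : 0 < A)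
    (hcop : Int.gcd A C = 1)
    (hP : B ^ 2 + σ * B * C - m * C ^ 2 = A ^ 2) :
    ∃ β : ℤ, (A ^ 2 ∣ β * C - B) ∧
      (∃ z : ℤ, ((B : ℚ) / A - (β : ℚ) * ((C : ℚ) / A)) / A = (z : ℚ)) ∧
      A ^ 2 ∣ β ^ 2 + σ * β - m :=
  rational_points_primitive_general σ m A B C hA hcop hP
end

section
/- Let Δ = σ + 4m and let Q = (A², 2β+σ, γ) with A²γ = Q₀(β,1) be a binary quadratic form of discriminant Δ. If (t,u) is a rational integer point with Q(t,u) = 1, then P = ((A²t + βu)/A, u/A) is a rational point of the Pell conic x² + σxy − my² = 1; moreover its inverse under the Pell group law is ((B + σC)/A, −C/A) = ((A²t + (β+σ)u)/A, −u/A), where (B,C) = (A²t + βu, u). -/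
/-- If `(t,u)` is an integer point of `Q = (A², 2β+σ, γ)` with `A²γ = Q₀(β,1)`,
then `P = ((A²t + βu)/A, u/A)` is a rational point of the Pell conic
`x² + σxy - my² = 1`, and its inverse under the Pell group law is
`((B + σC)/A, -C/A)` where `(B,C) = (A²t + βu, u)`. -/
theorem form_point_to_pell (σ m A β γ t u : ℤ) (hσ : σ = 0 ∨ σ = 1)
    (hA : (A : ℚ) ≠ 0) (hγ : A ^ 2 * γ = β ^ 2 + σ * β - m)
    (hQ : A ^ 2 * t ^ 2 + (2 * β + σ) * t * u + γ * u ^ 2 = 1) :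
    (((A : ℚ) ^ 2 * t + β * u) / A) ^ 2
      + (σ : ℚ) * (((A : ℚ) ^ 2 * t + β * u) / A) * ((u : ℚ) / A)
      - (m : ℚ) * ((u : ℚ) / A) ^ 2 = 1 ∧
    (((A : ℚ) ^ 2 * t + β * u) / A) * ((((A : ℚ) ^ 2 * t + β * u) + σ * u) / A)
      + (m : ℚ) * ((u : ℚ) / A) * (-(u : ℚ) / A) = 1 ∧
    (((A : ℚ) ^ 2 * t + β * u) / A) * (-(u : ℚ) / A)
      + ((((A : ℚ) ^ 2 * t + β * u) + σ * u) / A) * ((u : ℚ) / A)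
      + (σ : ℚ) * ((u : ℚ) / A) * (-(u : ℚ) / A) = 0 := by
  have hγ' : (A : ℚ) ^ 2 * γ = β ^ 2 + σ * β - m := by exact_mod_cast hγ
  have hQ' : (A : ℚ) ^ 2 * t ^ 2 + (2 * β + σ) * t * u + γ * u ^ 2 = 1 := by exact_mod_cast hQ
  refine ⟨?_, ?_, ?_⟩ <;> field_simp
  · linear_combination (A : ℚ) ^ 2 * hQ' - (u : ℚ) ^ 2 * hγ'
  · linear_combination (A : ℚ) ^ 2 * hQ' - (u : ℚ) ^ 2 * hγ'
  · ring
end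

section
/- Let Δ = σ + 4m, and let P = (x,y) be an algebraic point of the Pell conic with denominator A = den(y) and ratio β (so (x−βy)/A is an algebraic integer and A² | Q₀(β,1)). Suppose there exist rational integers t,u with A²t² + (2β+σ)tu + (Q₀(β,1)/A²)u² = 1. Then P ⊖ ((A²t+βu)/A, u/A) is an algebraic integer point of the Pell conic, i.e. P differs from a rational point of the conic by a point with algebraic-integer coordinates. -/
section PellConic

variable {K : Type*}

/-- The paper's `Q₀`. -/
def pellNorm [CommRing K] (σ m : ℤ) (P : K × K) : K :=
  P.1 ^ 2 + σ * P.1 * P.2 - m * P.2 ^ 2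

/-- The paper's `P ⊖ Q`. -/
def pellSub [CommRing K] (σ m : ℤ) (P Q : K × K) : K × K :=
  (P.1 * Q.1 + σ * P.1 * Q.2 - m * P.2 * Q.2, Q.1 * P.2 - P.1 * Q.2)

theorem pellNorm_pellSub [CommRing K] (σ m : ℤ) (P Q : K × K) :
    pellNorm σ m (pellSub σ m P Q) = pellNorm σ m P * pellNorm σ m Q := by
  simp only [pellNorm, pellSub]
  ring

def rationalPoint [Field K] (A : ℕ) (β t u : ℤ) : K × K :=
  (((A : K) ^ 2 * t + β * u) / A, (u : K) / A)

variable [Field K] {σ m β γ : ℤ} {A : ℕ}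

theorem pellNorm_rationalPoint (hA : (A : K) ≠ 0) (hγ : (A : ℤ) ^ 2 * γ = β ^ 2 + σ * β - m)
    {t u : ℤ} (hQ : (A : ℤ) ^ 2 * t ^ 2 + (2 * β + σ) * t * u + γ * u ^ 2 = 1) :
    pellNorm σ m (rationalPoint A β t u : K × K) = 1 := by
  have hγ' : (A : K) ^ 2 * γ = β ^ 2 + σ * β - m := mod_cast congrArg (Int.cast : ℤ → K) hγ
  have hQ' : (A : K) ^ 2 * t ^ 2 + (2 * β + σ) * t * u + γ * u ^ 2 = 1 :=
    mod_cast congrArg (Int.cast : ℤ → K) hQ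
  simp only [pellNorm, rationalPoint]
  field_simp
  linear_combination (A : K) ^ 2 * hQ' - (u : K) ^ 2 * hγ'

section Integrality

variable {x y : K} (hA : (A : K) ≠ 0) (hAy : IsIntegral ℤ ((A : K) * y))
  (hint : IsIntegral ℤ ((x - β * y) / A))
include hA hAy hint

theorem isIntegral_natCast_mul_of_ratio : IsIntegral ℤ ((A : K) * x) := by
  have hx : (A : K) * x = ((A ^ 2 : ℤ) : K) * ((x - β * y) / A) + (β : K) * (A * y) := by
    push_cast
    field_simp
    ring
  rw [hx]
  exact (isIntegral_algebraMap.mul hint).add (isIntegral_algebraMap.mul hAy)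

theorem isIntegral_conj_ratio (hγ : (A : ℤ) ^ 2 * γ = β ^ 2 + σ * β - m) :
    IsIntegral ℤ (((β + σ) * x - m * y) / A) := by
  have hγ' : (A : K) ^ 2 * γ = β ^ 2 + σ * β - m := mod_cast congrArg (Int.cast : ℤ → K) hγ
  have hconj : ((β + σ) * x - m * y) / A
      = ((β + σ : ℤ) : K) * ((x - β * y) / A) + (γ : K) * (A * y) := by
    push_cast
    field_simp
    linear_combination (-y) * hγ'
  rw [hconj]
  exact (isIntegral_algebraMap.mul hint).add (isIntegral_algebraMap.mul hAy)

theorem isIntegral_pellSub_rationalPoint (hγ : (A : ℤ) ^ 2 * γ = β ^ 2 + σ * β - m) (t u : ℤ) :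
    IsIntegral ℤ (pellSub σ m (x, y) (rationalPoint A β t u)).1 ∧
      IsIntegral ℤ (pellSub σ m (x, y) (rationalPoint A β t u)).2 := by
  have hfst : (pellSub σ m (x, y) (rationalPoint A β t u)).1
      = (t : K) * (A * x) + (u : K) * (((β + σ) * x - m * y) / A) := by
    simp only [pellSub, rationalPoint]
    field_simp
    ring
  have hsnd : (pellSub σ m (x, y) (rationalPoint A β t u)).2
      = (t : K) * (A * y) + ((-u : ℤ) : K) * ((x - β * y) / A) := by
    simp only [pellSub, rationalPoint]
    push_cast
    field_simp
    ring
  rw [hfst, hsnd]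
  exact ⟨(isIntegral_algebraMap.mul (isIntegral_natCast_mul_of_ratio hA hAy hint)).add
      (isIntegral_algebraMap.mul (isIntegral_conj_ratio hA hAy hint hγ)),
    (isIntegral_algebraMap.mul hAy).add (isIntegral_algebraMap.mul hint)⟩

end Integrality

end PellConic

theorem sub_rational_point_integral_general (σ m : ℤ)
    (x y : ℂ) (hP : x ^ 2 + (σ : ℂ) * x * y - (m : ℂ) * y ^ 2 = 1)
    (A : ℕ) (hA : IsDenominator y A)
    (β γ : ℤ) (hint : IsIntegral ℤ ((x - (β : ℂ) * y) / (A : ℂ)))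
    (hγ : (A : ℤ) ^ 2 * γ = β ^ 2 + σ * β - m)
    (t u : ℤ) (hQ : (A : ℤ) ^ 2 * t ^ 2 + (2 * β + σ) * t * u + γ * u ^ 2 = 1) :
    IsIntegral ℤ (x * (((A : ℂ) ^ 2 * t + β * u) / A)
        + (σ : ℂ) * x * ((u : ℂ) / A) - (m : ℂ) * y * ((u : ℂ) / A)) ∧
    IsIntegral ℤ ((((A : ℂ) ^ 2 * t + β * u) / A) * y - x * ((u : ℂ) / A)) ∧
    (x * (((A : ℂ) ^ 2 * t + β * u) / A)
        + (σ : ℂ) * x * ((u : ℂ) / A) - (m : ℂ) * y * ((u : ℂ) / A)) ^ 2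
      + (σ : ℂ) * (x * (((A : ℂ) ^ 2 * t + β * u) / A)
          + (σ : ℂ) * x * ((u : ℂ) / A) - (m : ℂ) * y * ((u : ℂ) / A))
        * ((((A : ℂ) ^ 2 * t + β * u) / A) * y - x * ((u : ℂ) / A))
      - (m : ℂ) * ((((A : ℂ) ^ 2 * t + β * u) / A) * y - x * ((u : ℂ) / A)) ^ 2
      = 1 := by
  obtain ⟨⟨hApos, hAy⟩, -⟩ := hA
  have hA0 : (A : ℂ) ≠ 0 := Nat.cast_ne_zero.mpr hApos.ne'
  obtain ⟨hfst, hsnd⟩ := isIntegral_pellSub_rationalPoint hA0 hAy hint hγ t u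
  have hnorm : pellNorm σ m (pellSub σ m (x, y) (rationalPoint A β t u)) = 1 := by
    rw [pellNorm_pellSub, pellNorm_rationalPoint hA0 hγ hQ]
    exact (mul_one _).trans hP
  exact ⟨hfst, hsnd, hnorm⟩

/-- If `P = (x,y)` is an algebraic point of the Pell conic with denominator
`A = den(y)` and ratio `β`, and the form `(A², 2β+σ, Q₀(β,1)/A²)` represents `1`
over the rational integers, say at `(t,u)`, then
`P ⊖ ((A²t+βu)/A, u/A)` is an algebraic integer point of the Pell conic, where
`P₁ ⊖ P₂ = (x₁x₂ + σx₁y₂ - my₁y₂, x₂y₁ - x₁y₂)`. -/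
theorem sub_rational_point_integral (σ m : ℤ) (hσ : σ = 0 ∨ σ = 1)
    (x y : ℂ) (hP : x ^ 2 + (σ : ℂ) * x * y - (m : ℂ) * y ^ 2 = 1)
    (A : ℕ) (hA : IsDenominator y A)
    (β γ : ℤ) (hint : IsIntegral ℤ ((x - (β : ℂ) * y) / (A : ℂ)))
    (hγ : (A : ℤ) ^ 2 * γ = β ^ 2 + σ * β - m)
    (t u : ℤ) (hQ : (A : ℤ) ^ 2 * t ^ 2 + (2 * β + σ) * t * u + γ * u ^ 2 = 1) :
    IsIntegral ℤ (x * (((A : ℂ) ^ 2 * t + β * u) / A)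
        + (σ : ℂ) * x * ((u : ℂ) / A) - (m : ℂ) * y * ((u : ℂ) / A)) ∧
    IsIntegral ℤ ((((A : ℂ) ^ 2 * t + β * u) / A) * y - x * ((u : ℂ) / A)) ∧
    (x * (((A : ℂ) ^ 2 * t + β * u) / A)
        + (σ : ℂ) * x * ((u : ℂ) / A) - (m : ℂ) * y * ((u : ℂ) / A)) ^ 2
      + (σ : ℂ) * (x * (((A : ℂ) ^ 2 * t + β * u) / A)
          + (σ : ℂ) * x * ((u : ℂ) / A) - (m : ℂ) * y * ((u : ℂ) / A))
        * ((((A : ℂ) ^ 2 * t + β * u) / A) * y - x * ((u : ℂ) / A))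
      - (m : ℂ) * ((((A : ℂ) ^ 2 * t + β * u) / A) * y - x * ((u : ℂ) / A)) ^ 2
      = 1 :=
  sub_rational_point_integral_general σ m x y hP A hA β γ hint hγ t u hQ
end
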